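/- Let g and h be finite-dimensional Lie algebras over ℂ, ρ a coherent action of g on h, T : h → g a nonabelian embedding tensor, and x ∈ g a Nijenhuis element associated to T (i.e. [[x,y]_g,[x,z]_g]_g = 0 for all y,z ∈ g, ρ([x,y]_g)∘ρ(x) = 0 for all y ∈ g, and [x, T(ρ(x)u) − [x,Tu]_g]_g = 0 for all u ∈ h). Define 𝔗 : h → g by 𝔗(u) = T(ρ(x)u) − [x, Tu]_g. Then for every t ∈ ℂ, T_t = T + t𝔗 is a nonabelian embedding tensor on g with respect to (h;ρ), and (Id_g + t·ad_x, Id_h + t·ρ(x)) is a homomorphism from T_t to T; that is, 𝔗 generates a trivial linear deformation of T. -/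
import Mathlib


variable {g : Type*} [LieRing g] [LieAlgebra ℂ g] [FiniteDimensional ℂ g]
variable {h : Type*} [LieRing h] [LieAlgebra ℂ h] [FiniteDimensional ℂ h]

/-- The 1-coboundary `𝔗 = ∂_T x : h → g`, `𝔗(u) = T(ρ(x)u) − [x, Tu]`, as a linear map. -/
def nijCoboundary (ρ : g →ₗ[ℂ] h →ₗ[ℂ] h) (T : h →ₗ[ℂ] g) (x : g) : h →ₗ[ℂ] g :=
  T ∘ₗ ρ x - (LieAlgebra.ad ℂ g x) ∘ₗ T

lemma nijCoboundary_apply (ρ : g →ₗ[ℂ] h →ₗ[ℂ] h) (T : h →ₗ[ℂ] g) (x : g) (u : h) :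
    nijCoboundary ρ T x u = T (ρ x u) - ⁅x, T u⁆ := by
  simp [nijCoboundary]

/-- if `x` is a Nijenhuis element associated to a nonabelian embedding tensor
`T` on a finite-dimensional complex Lie algebra `g` with respect to a coherent action
`(h;ρ)`, then `𝔗 = ∂_T x` generates a trivial linear deformation of `T`: for every `t ∈ ℂ`,
`T_t = T + t𝔗` is a nonabelian embedding tensor and `(Id_g + t·ad_x, Id_h + t·ρ(x))` is a
homomorphism from `T_t` to `T`. -/
theorem nijenhuis_trivial_deformation (ρ : g →ₗ[ℂ] h →ₗ[ℂ] h)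
    (hρ_der : ∀ (x : g) (u v : h), ρ x ⁅u, v⁆ = ⁅ρ x u, v⁆ + ⁅u, ρ x v⁆)
    (hρ_hom : ∀ (x y : g) (u : h), ρ ⁅x, y⁆ u = ρ x (ρ y u) - ρ y (ρ x u))
    (hρ_coh : ∀ (x : g) (u v : h), ⁅ρ x u, v⁆ = (0 : h))
    (T : h →ₗ[ℂ] g)
    (hT : ∀ u v : h, ⁅T u, T v⁆ = T (ρ (T u) v + ⁅u, v⁆))
    (x : g)
    (hNij1 : ∀ y z : g, ⁅⁅x, y⁆, ⁅x, z⁆⁆ = (0 : g))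
    (hNij2 : ∀ (y : g) (u : h), ρ ⁅x, y⁆ (ρ x u) = (0 : h))
    (hNij3 : ∀ u : h, ⁅x, T (ρ x u) - ⁅x, T u⁆⁆ = (0 : g)) :
    ∀ t : ℂ,
      -- T_t = T + t·𝔗 is a nonabelian embedding tensor
      (∀ u v : h,
        ⁅(T + t • nijCoboundary ρ T x) u, (T + t • nijCoboundary ρ T x) v⁆ =
          (T + t • nijCoboundary ρ T x)
            (ρ ((T + t • nijCoboundary ρ T x) u) v + ⁅u, v⁆)) ∧
      -- Id_g + t·ad_x is a Lie algebra endomorphism of g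
      (∀ y z : g, ⁅y, z⁆ + t • ⁅x, ⁅y, z⁆⁆ = ⁅y + t • ⁅x, y⁆, z + t • ⁅x, z⁆⁆) ∧
      -- Id_h + t·ρ(x) is a Lie algebra endomorphism of h
      (∀ u v : h, ⁅u, v⁆ + t • ρ x ⁅u, v⁆ = ⁅u + t • ρ x u, v + t • ρ x v⁆) ∧
      -- T ∘ (Id_h + t·ρ(x)) = (Id_g + t·ad_x) ∘ T_t
      (∀ u : h,
        T (u + t • ρ x u) =
          (T + t • nijCoboundary ρ T x) u + t • ⁅x, (T + t • nijCoboundary ρ T x) u⁆) ∧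
      -- compatibility with the action ρ
      (∀ (y : g) (u : h),
        ρ y u + t • ρ x (ρ y u) = ρ (y + t • ⁅x, y⁆) (u + t • ρ x u)) := by
  -- abbreviation for the coboundary
  set N := nijCoboundary ρ T x with hN
  have hNapp : ∀ u, N u = T (ρ x u) - ⁅x, T u⁆ := fun u => nijCoboundary_apply ρ T x u
  -- ⁅x, T (ρ x w)⁆ = ⁅x, ⁅x, T w⁆⁆
  have hxN : ∀ w : h, ⁅x, T (ρ x w)⁆ = ⁅x, ⁅x, T w⁆⁆ := by
    intro w
    have := hNij3 w
    rw [lie_sub, sub_eq_zero] at this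
    exact this
  have hxN' : ∀ w : h, ⁅x, T (ρ x w)⁆ = ⁅x, ⁅x, T w⁆⁆ := hxN
  -- ρ x ⁅u,v⁆ = ⁅u, ρ x v⁆
  have hρlie : ∀ u v : h, ρ x ⁅u, v⁆ = ⁅u, ρ x v⁆ := by
    intro u v
    rw [hρ_der, hρ_coh, zero_add]
  -- key lemma, order t
  have key1 : ∀ u v : h, ⁅N u, T v⁆ + ⁅T u, N v⁆ = T (ρ (N u) v) + N (ρ (T u) v + ⁅u, v⁆) := by
    intro u v
    have e1 : ⁅T (ρ x u), T v⁆ = T (ρ (T (ρ x u)) v) := by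
      rw [hT, hρ_coh, add_zero]
    have e2 : ⁅T u, T (ρ x v)⁆ = T (ρ (T u) (ρ x v)) + T ⁅u, ρ x v⁆ := by
      rw [hT, map_add]
    have e3 : ⁅⁅x, T u⁆, T v⁆ + ⁅T u, ⁅x, T v⁆⁆ = ⁅x, ⁅T u, T v⁆⁆ :=
      (leibniz_lie x (T u) (T v)).symm
    have e4 : ρ x (ρ (T u) v) = ρ ⁅x, T u⁆ v + ρ (T u) (ρ x v) := by
      rw [hρ_hom]; abel
    have e5 : ρ (N u) v = ρ (T (ρ x u)) v - ρ ⁅x, T u⁆ v := by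
      rw [hNapp, map_sub, LinearMap.sub_apply]
    rw [e5, map_sub, hNapp (ρ (T u) v + ⁅u, v⁆), map_add, hρlie, e4, ← hT u v,
      map_add, map_add, hNapp u, hNapp v, sub_lie, lie_sub, e1, e2, ← e3]
    abel
  -- key lemma, order t²
  have key2 : ∀ u v : h, ⁅N u, N v⁆ = N (ρ (N u) v) := by
    intro u v
    have g1 : ⁅T (ρ x u), T (ρ x v)⁆ = T (ρ (T (ρ x u)) (ρ x v)) := by
      rw [hT, hρ_coh, add_zero]
    have g2 : ⁅T (ρ x u), ⁅x, T v⁆⁆ = ⁅x, T (ρ (T (ρ x u)) v)⁆ - ⁅⁅x, ⁅x, T u⁆⁆, T v⁆ := by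
      have hl := leibniz_lie x (T (ρ x u)) (T v)
      have hb : ⁅T (ρ x u), T v⁆ = T (ρ (T (ρ x u)) v) := by rw [hT, hρ_coh, add_zero]
      rw [hb, hxN u] at hl
      rw [hl]; abel
    have g3 : ⁅⁅x, T u⁆, T (ρ x v)⁆ =
        ⁅x, T (ρ (T u) (ρ x v))⁆ + ⁅x, T ⁅u, ρ x v⁆⁆ - ⁅T u, ⁅x, ⁅x, T v⁆⁆⁆ := by
      have hl := leibniz_lie x (T u) (T (ρ x v))
      rw [hxN v, hT u (ρ x v), map_add, lie_add] at hl
      rw [hl]; abel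
    have g4 : ⁅⁅x, T u⁆, ⁅x, T v⁆⁆ = 0 := hNij1 (T u) (T v)
    have r0 : ρ (N u) v = ρ (T (ρ x u)) v - ρ ⁅x, T u⁆ v := by
      rw [hNapp, map_sub, LinearMap.sub_apply]
    have r1 : T (ρ x (ρ (T (ρ x u)) v)) =
        T (ρ (T (ρ x u)) (ρ x v)) + T (ρ x (ρ ⁅x, T u⁆ v)) := by
      have h1 := hρ_hom x (T (ρ x u)) v
      rw [hxN' u] at h1
      have h2 := hρ_hom x ⁅x, T u⁆ v
      rw [hNij2 (T u) v, sub_zero] at h2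
      rw [h2] at h1
      rw [show ρ x (ρ (T (ρ x u)) v) = ρ (T (ρ x u)) (ρ x v) + ρ x (ρ ⁅x, T u⁆ v) by
        rw [h1]; abel, map_add]
    have r2 : ⁅x, T (ρ ⁅x, T u⁆ v)⁆ =
        ⁅⁅x, ⁅x, T u⁆⁆, T v⁆ + ⁅T u, ⁅x, ⁅x, T v⁆⁆⁆ - ⁅x, T ⁅u, ρ x v⁆⁆
          - ⁅x, T (ρ (T u) (ρ x v))⁆ := by
      have h1 : ρ ⁅x, T u⁆ v = ρ x (ρ (T u) v) - ρ (T u) (ρ x v) := hρ_hom _ _ _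
      have h2 : ⁅x, T (ρ x (ρ (T u) v))⁆ = ⁅x, ⁅x, T (ρ (T u) v)⁆⁆ := hxN _
      have h3 : T (ρ (T u) v) = ⁅T u, T v⁆ - T ⁅u, v⁆ := by
        rw [hT u v, map_add]; abel
      have h4 : ⁅x, ⁅x, T ⁅u, v⁆⁆⁆ = ⁅x, T ⁅u, ρ x v⁆⁆ := by
        rw [← hxN ⁅u, v⁆, hρlie]
      have h5 : ⁅x, ⁅x, ⁅T u, T v⁆⁆⁆ = ⁅⁅x, ⁅x, T u⁆⁆, T v⁆ + ⁅T u, ⁅x, ⁅x, T v⁆⁆⁆ := by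
        rw [leibniz_lie x (T u) (T v), lie_add, leibniz_lie x ⁅x, T u⁆ (T v),
          leibniz_lie x (T u) ⁅x, T v⁆, hNij1 (T u) (T v)]
        abel
      rw [h1, map_sub, lie_sub, h2, h3, lie_sub, lie_sub, h4, h5]
    rw [r0, map_sub, hNapp (ρ (T (ρ x u)) v), hNapp (ρ ⁅x, T u⁆ v),
      hNapp u, hNapp v, sub_lie, lie_sub, lie_sub, g1, g2, g3, g4, r1, r2]
    abel
  intro t
  refine ⟨?_, ?_, ?_, ?_, ?_⟩
  · -- the deformed embedding tensor identity
    intro u v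
    have k1' : N (ρ (T u) v + ⁅u, v⁆) = ⁅N u, T v⁆ + ⁅T u, N v⁆ - T (ρ (N u) v) := by
      rw [eq_sub_iff_add_eq, key1 u v]; abel
    have hTt : ∀ w : h, (T + t • N) w = T w + t • N w := fun w => rfl
    simp only [hTt]
    have expand : ρ (T u + t • N u) v + ⁅u, v⁆ =
        (ρ (T u) v + ⁅u, v⁆) + t • (ρ (N u) v) := by
      rw [map_add, map_smul, LinearMap.add_apply, LinearMap.smul_apply]; abel
    rw [expand, map_add T (ρ (T u) v + ⁅u, v⁆) (t • ρ (N u) v),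
      map_smul T t (ρ (N u) v), map_add N (ρ (T u) v + ⁅u, v⁆) (t • ρ (N u) v),
      map_smul N t (ρ (N u) v), ← hT u v, ← key2 u v, k1']
    simp only [lie_add, add_lie, lie_smul, smul_lie, smul_smul]
    module
  · -- Id + t ad x is a Lie hom
    intro y z
    simp only [add_lie, lie_add, smul_lie, lie_smul, smul_smul]
    rw [hNij1 y z, smul_zero, add_zero, leibniz_lie x y z, smul_add]
    abel
  · -- Id + t ρ x is a Lie hom
    intro u v
    simp only [add_lie, lie_add, smul_lie, lie_smul, smul_smul, hρ_coh, smul_zero,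
      zero_add, add_zero]
    rw [hρlie]
  · -- intertwining of T
    intro u
    simp only [LinearMap.add_apply, LinearMap.smul_apply, map_add, map_smul]
    rw [hNapp u, lie_add, lie_smul, hNij3 u, smul_zero, add_zero, smul_sub]
    abel
  · -- compatibility with ρ
    intro y u
    simp only [map_add, map_smul, LinearMap.add_apply, LinearMap.smul_apply, smul_smul]
    rw [hNij2 y u, smul_zero, add_zero, hρ_hom x y u, smul_sub]
    abel
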